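/- Let φ₁(x₀,x₁) and φ₂(y₀,y₁) be homogeneous polynomials of degree d over ℂ. If the polynomial φ₁(x₀,x₁) − φ₂(y₀,y₁) in four variables is divisible by x₁ − y₁, then φ₁(x₀,x₁) − φ₂(y₀,y₁) is a scalar multiple of x₁^d − y₁^d. -/

import Mathlib

/-!
Substituting `x₁ ↦ y₁` kills `x₁ - y₁`, hence `φ₁(x₀, y₁) = φ₂(y₀, y₁)`. The left side does not
involve `y₀` and the right side does not involve `x₀`, so `x₀` does not occur in `φ₁`; being
homogeneous, `φ₁ = c x₁^d`, and then the same identity forces `φ₂ = c y₁^d`.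
-/

open MvPolynomial

namespace MvPolynomial

variable {σ τ R : Type*}

theorem rename_eq_zero_of_X_sub_X_dvd [CommRing R] {f : σ → τ} {i j : σ} (hij : f i = f j)
    {p : MvPolynomial σ R} (h : X i - X j ∣ p) : rename f p = 0 := by
  obtain ⟨q, rfl⟩ := h
  simp [hij]

theorem notMem_vars_of_rename_eq_rename [CommSemiring R] {f g : σ → τ}
    (hf : Function.Injective f) {p q : MvPolynomial σ R} (h : rename f p = rename g q) {i : σ}
    (hi : f i ∉ Set.range g) : i ∉ p.vars := by
  intro hv
  have hfi : f i ∈ (rename g q).vars := by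
    rwa [← h, mem_vars_iff_degreeOf_ne_zero, degreeOf_rename_of_injective hf,
      ← mem_vars_iff_degreeOf_ne_zero]
  obtain ⟨k, -, hk⟩ := mem_vars_rename g q hfi
  exact hi ⟨k, hk⟩

theorem IsHomogeneous.eq_C_mul_X_pow_of_vars_subset [CommSemiring R] {p : MvPolynomial σ R}
    {n : ℕ} (hp : p.IsHomogeneous n) {i : σ} (hv : p.vars ⊆ {i}) :
    p = C (coeff (Finsupp.single i n) p) * X i ^ n := by
  classical
  ext m
  rw [coeff_C_mul, coeff_X_pow]
  split_ifs with hm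
  · rw [hm, mul_one]
  · rw [mul_zero]
    by_contra hne
    have hsupp : m.support ⊆ {i} := fun j hj =>
      hv ((mem_vars_iff_mem_support j).2 ⟨m, mem_support_iff.2 hne, hj⟩)
    rw [Finsupp.support_subset_singleton] at hsupp
    have hdeg : m.degree = n := by
      by_contra hd
      exact hne (hp.coeff_eq_zero hd)
    rw [hsupp, Finsupp.degree_single] at hdeg
    exact hm (by rw [hsupp, hdeg])

end MvPolynomial

theorem stmt_0_general (d : ℕ) (φ₁ φ₂ : MvPolynomial (Fin 2) ℂ)
    (h₁ : φ₁.IsHomogeneous d)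
    (hdvd : (X 1 - X 3 : MvPolynomial (Fin 4) ℂ) ∣
      rename (![0, 1] : Fin 2 → Fin 4) φ₁ - rename (![2, 3] : Fin 2 → Fin 4) φ₂) :
    ∃ c : ℂ, rename (![0, 1] : Fin 2 → Fin 4) φ₁ - rename (![2, 3] : Fin 2 → Fin 4) φ₂
      = C c * ((X 1 : MvPolynomial (Fin 4) ℂ) ^ d - (X 3) ^ d) := by
  have hsub : rename ![0, 3] φ₁ = rename (![2, 3] : Fin 2 → Fin 4) φ₂ := by
    have h := rename_eq_zero_of_X_sub_X_dvd (f := Function.update id 1 3) (by simp) hdvd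
    have e₁ : Function.update id 1 3 ∘ ![0, 1] = (![0, 3] : Fin 2 → Fin 4) := by decide
    have e₂ : Function.update id 1 3 ∘ ![2, 3] = (![2, 3] : Fin 2 → Fin 4) := by decide
    rwa [map_sub, rename_rename, rename_rename, e₁, e₂, sub_eq_zero] at h
  have hvars : φ₁.vars ⊆ {1} := by
    intro j hj
    fin_cases j
    · exact absurd hj (notMem_vars_of_rename_eq_rename (by decide) hsub (by decide))
    · exact Finset.mem_singleton_self 1
  set c := coeff (Finsupp.single 1 d) φ₁
  have hφ₁ : φ₁ = C c * X 1 ^ d := h₁.eq_C_mul_X_pow_of_vars_subset hvars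
  have hφ₂ : φ₂ = C c * X 1 ^ d :=
    rename_injective (![2, 3] : Fin 2 → Fin 4) (by decide) (by rw [← hsub, hφ₁]; simp)
  refine ⟨c, ?_⟩
  rw [hφ₁, hφ₂]
  simp [mul_sub]

/-- If `φ₁(x₀,x₁) - φ₂(y₀,y₁)` (binary forms of degree `d`, viewed in
`ℂ[x₀,x₁,y₀,y₁]` with variables `x₀,x₁,y₀,y₁` indexed by `0,1,2,3`) is divisible by
`x₁ - y₁`, then it is a scalar multiple of `x₁^d - y₁^d`. -/
theorem stmt_0 (d : ℕ) (φ₁ φ₂ : MvPolynomial (Fin 2) ℂ)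
    (h₁ : φ₁.IsHomogeneous d) (h₂ : φ₂.IsHomogeneous d)
    (hdvd : (X 1 - X 3 : MvPolynomial (Fin 4) ℂ) ∣
      rename (![0, 1] : Fin 2 → Fin 4) φ₁ - rename (![2, 3] : Fin 2 → Fin 4) φ₂) :
    ∃ c : ℂ, rename (![0, 1] : Fin 2 → Fin 4) φ₁ - rename (![2, 3] : Fin 2 → Fin 4) φ₂
      = C c * ((X 1 : MvPolynomial (Fin 4) ℂ) ^ d - (X 3) ^ d) :=
  stmt_0_general d φ₁ φ₂ h₁ hdvd
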